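/- An alternating assignment of over/under information exists for every projection: given any 4-regular plane graph (projection) one can choose crossing information at each vertex so that along every strand the crossings alternate over, under, over, under; furthermore this assignment is unique up to globally swapping over and under on each connected component. -/

import Mathlib

open MulAction Module

section Stmt15Aux
variable {Dk : Type*} [Fintype Dk]
set_option linter.unusedSectionVars false
set_option maxHeartbeats 1000000

private lemma stmt15_apply_inv_self {X : Type*} (f : Equiv.Perm X) (x : X) :
    f (f⁻¹ x) = x := f.apply_symm_apply x

/-- Submodule of functions invariant under a permutation. -/
private def stmt15inv (π : Equiv.Perm Dk) : Submodule (ZMod 2) (Dk → ZMod 2) where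
  carrier := {u | ∀ d, u (π d) = u d}
  add_mem' := by intro a b ha hb d; simp [ha d, hb d]
  zero_mem' := by intro d; simp
  smul_mem' := by intro c a ha d; simp [ha d]

private lemma stmt15_zpow_inv {π : Equiv.Perm Dk} {u : Dk → ZMod 2}
    (hu : ∀ d, u (π d) = u d) : ∀ (n : ℤ) (d), u ((π ^ n) d) = u d := by
  have hnat : ∀ (n : ℕ) (d), u ((π ^ n) d) = u d := by
    intro n
    induction n with
    | zero => intro d; simp
    | succ n ih => intro d; rw [pow_succ, Equiv.Perm.mul_apply, ih (π d), hu d]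
  intro n d
  rcases le_or_gt 0 n with h | h
  · obtain ⟨m, rfl⟩ := Int.eq_ofNat_of_zero_le h
    rw [zpow_natCast]; exact hnat m d
  · obtain ⟨m, rfl⟩ : ∃ m : ℕ, n = -(m:ℤ) := ⟨n.natAbs, by omega⟩
    have h2 := hnat m (((π ^ m)⁻¹) d)
    simp only [stmt15_apply_inv_self] at h2
    rw [zpow_neg, zpow_natCast, h2]

private lemma stmt15_finrank_stmt15inv (π : Equiv.Perm Dk) :
    finrank (ZMod 2) (stmt15inv π) =
      Nat.card (Quotient (orbitRel ↥(Subgroup.zpowers π) Dk)) := by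
  classical
  set Q := Quotient (orbitRel ↥(Subgroup.zpowers π) Dk)
  have hrel : ∀ a b : Dk, (orbitRel ↥(Subgroup.zpowers π) Dk).r a b →
      ∀ u ∈ stmt15inv π, u a = u b := by
    intro a b hab u hu
    rw [orbitRel_apply] at hab
    obtain ⟨⟨g, hg⟩, rfl⟩ := hab
    obtain ⟨n, rfl⟩ := hg
    exact stmt15_zpow_inv hu n b
  let F : stmt15inv π →ₗ[ZMod 2] (Q → ZMod 2) :=
    { toFun := fun u => Quotient.lift (fun d => (u : Dk → ZMod 2) d)
        (fun a b hab => hrel a b hab u u.2)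
      map_add' := by intro a b; funext q; induction q using Quotient.ind; rfl
      map_smul' := by intro c a; funext q; induction q using Quotient.ind; rfl }
  let G : (Q → ZMod 2) →ₗ[ZMod 2] stmt15inv π :=
    { toFun := fun c => ⟨fun d => c ⟦d⟧, by
        intro d
        exact congrArg c (Quotient.sound
          (MulAction.orbitRel_apply.mpr ⟨⟨π, Subgroup.mem_zpowers π⟩, rfl⟩))⟩
      map_add' := by intro a b; rfl
      map_smul' := by intro c a; rfl }
  have hFG : F.comp G = LinearMap.id := by
    apply LinearMap.ext; intro c; funext q
    induction q using Quotient.ind; rfl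
  have hGF : G.comp F = LinearMap.id := by
    apply LinearMap.ext; intro u; apply Subtype.ext; funext d; rfl
  let e : stmt15inv π ≃ₗ[ZMod 2] (Q → ZMod 2) :=
    LinearEquiv.ofLinear F G hFG hGF
  haveI : Finite Q := Quotient.finite _
  haveI : Fintype Q := Fintype.ofFinite Q
  rw [e.finrank_eq, Module.finrank_pi, Nat.card_eq_fintype_card]

private lemma stmt15_orbit_card (π : Equiv.Perm Dk) (d : Dk) :
    (MulAction.orbit ↥(Subgroup.zpowers π) d).ncard
      = Function.minimalPeriod (fun x => π • x) d := by
  rw [← Nat.card_coe_set_eq, Nat.card_congr (MulAction.orbitZPowersEquiv π d),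
    Nat.card_zmod]

-- σ^4 = 1 pointwise and σ² fixed point free, from orbit card = 4
private lemma stmt15_sigma4 {σ : Equiv.Perm Dk}
    (hσ4 : ∀ d : Dk, (MulAction.orbit ↥(Subgroup.zpowers σ) d).ncard = 4) (d : Dk) :
    σ (σ (σ (σ d))) = d ∧ σ (σ d) ≠ d := by
  have hmp : Function.minimalPeriod (fun x => σ • x) d = 4 := by
    rw [← stmt15_orbit_card]; exact hσ4 d
  have hiter : ∀ n : ℕ, (fun x => σ • x)^[n] d = (σ ^ n) d := by
    intro n
    induction n with
    | zero => simp
    | succ n ih =>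
        rw [Function.iterate_succ_apply', ih, pow_succ']
        rfl
  constructor
  · have := Function.iterate_minimalPeriod (f := fun x => σ • x) (x := d)
    rw [hmp, hiter 4] at this
    simpa [pow_succ, Equiv.Perm.mul_apply] using this
  · intro h
    have : Function.IsPeriodicPt (fun x => σ • x) 2 d := by
      unfold Function.IsPeriodicPt Function.IsFixedPt
      rw [hiter 2]
      simpa [pow_succ, Equiv.Perm.mul_apply] using h
    have hdvd := Function.IsPeriodicPt.minimalPeriod_dvd this
    rw [hmp] at hdvd
    omega

private lemma stmt15_orbit_card' (π : Equiv.Perm Dk) (d : Dk) :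
    (MulAction.orbit ↥(Subgroup.zpowers π) d).ncard
      = Function.minimalPeriod (fun x => π • x) d := by
  rw [← Nat.card_coe_set_eq, Nat.card_congr (MulAction.orbitZPowersEquiv π d),
    Nat.card_zmod]

private lemma stmt15_card_eq {σ : Equiv.Perm Dk} (k : ℕ)
    (h : ∀ d : Dk, (MulAction.orbit ↥(Subgroup.zpowers σ) d).ncard = k) :
    Fintype.card Dk =
      k * Nat.card (Quotient (orbitRel ↥(Subgroup.zpowers σ) Dk)) := by
  classical
  set G := ↥(Subgroup.zpowers σ)
  have e := MulAction.selfEquivSigmaOrbits G Dk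
  haveI : ∀ ω : orbitRel.Quotient G Dk, Fintype (MulAction.orbit G (Quotient.out ω)) :=
    fun ω => Fintype.ofFinite _
  haveI : Fintype (orbitRel.Quotient G Dk) := Fintype.ofFinite _
  have hcard : Fintype.card Dk = ∑ ω : orbitRel.Quotient G Dk,
      Fintype.card (MulAction.orbit G (Quotient.out ω)) := by
    rw [Fintype.card_congr e, Fintype.card_sigma]
  rw [hcard]
  have : ∀ ω : orbitRel.Quotient G Dk,
      Fintype.card (MulAction.orbit G (Quotient.out ω)) = k := by
    intro ω
    have := h (Quotient.out ω)
    rwa [← Nat.card_coe_set_eq, Nat.card_eq_fintype_card] at this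
  rw [Finset.sum_congr rfl (fun ω _ => this ω), Finset.sum_const, smul_eq_mul,
    Nat.card_eq_fintype_card, Finset.card_univ, mul_comm]

-- α-orbits have size 2
private lemma stmt15_alpha_orbit {α : Equiv.Perm Dk}
    (hα2 : α * α = 1) (hαfix : ∀ d, α d ≠ d) (d : Dk) :
    (MulAction.orbit ↥(Subgroup.zpowers α) d).ncard = 2 := by
  rw [stmt15_orbit_card']
  have h2 : Function.IsPeriodicPt (fun x => α • x) 2 d := by
    unfold Function.IsPeriodicPt Function.IsFixedPt
    show α • α • d = d
    show α (α d) = d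
    rw [← Equiv.Perm.mul_apply, hα2]; rfl
  have hdvd := Function.IsPeriodicPt.minimalPeriod_dvd h2
  have hpos : 0 < Function.minimalPeriod (fun x => α • x) d := by
    apply Function.IsPeriodicPt.minimalPeriod_pos (by norm_num) h2
  have hne1 : Function.minimalPeriod (fun x => α • x) d ≠ 1 := by
    intro h1
    have := Function.iterate_minimalPeriod (f := fun x => α • x) (x := d)
    rw [h1] at this
    exact hαfix d this
  have := Nat.le_of_dvd (by norm_num) hdvd
  interval_cases h : Function.minimalPeriod (fun x => α • x) d <;> omega

private lemma stmt15_trans {σ α : Equiv.Perm Dk}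
    (hconn : ∀ d d' : Dk,
      ∃ g ∈ Subgroup.closure ({σ, α} : Set (Equiv.Perm Dk)), g d = d')
    {X : Type*} (u : Dk → X)
    (h1 : ∀ d, u (σ d) = u d) (h2 : ∀ d, u (α d) = u d) :
    ∀ d d', u d = u d' := by
  have key : ∀ g ∈ Subgroup.closure ({σ, α} : Set (Equiv.Perm Dk)),
      ∀ d, u (g d) = u d := by
    intro g hg
    induction hg using Subgroup.closure_induction with
    | mem x hx =>
        rcases hx with rfl | rfl
        · exact h1
        · exact h2
    | one => intro d; rfl
    | mul x y hx hy ihx ihy =>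
        intro d
        rw [Equiv.Perm.mul_apply, ihx, ihy]
    | inv x hx ih =>
        intro d
        have := ih (x⁻¹ d)
        rw [stmt15_apply_inv_self] at this
        exact this.symm
  intro d d'
  obtain ⟨g, hg, rfl⟩ := hconn d d'
  exact (key g hg d).symm

private lemma stmt15_exists {σ α : Equiv.Perm Dk}
    (hα2 : α * α = 1) (hαfix : ∀ d, α d ≠ d)
    (hσ4fix : ∀ d, σ (σ (σ (σ d))) = d ∧ σ (σ d) ≠ d)
    (hconst : ∀ (u : Dk → ZMod 2), (∀ d, u (σ d) = u d) → (∀ d, u (α d) = u d) →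
      ∀ d d', u d = u d')
    (d₀ : Dk)
    (hnum : Module.finrank (ZMod 2) (stmt15inv σ) +
        Module.finrank (ZMod 2) (stmt15inv (σ * α)) =
      Module.finrank (ZMod 2) (stmt15inv α) + 2)
    (hnum2 : Fintype.card Dk = 2 * Module.finrank (ZMod 2) (stmt15inv α)) :
    ∃ u : Dk → ZMod 2, (∀ d, u (σ d) = u d + 1) ∧ (∀ d, u (α d) = u d + 1) := by
  classical
  have memW : ∀ u : Dk → ZMod 2, u ∈ stmt15inv (σ * α) ↔ ∀ d, u (σ (α d)) = u d := by
    intro u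
    constructor
    · intro h d; have := h d; rwa [Equiv.Perm.mul_apply] at this
    · intro h d; rw [Equiv.Perm.mul_apply]; exact h d
  -- the map L
  let L : stmt15inv (σ * α) →ₗ[ZMod 2] (Dk → ZMod 2) :=
    { toFun := fun u => fun d => (u : Dk → ZMod 2) (σ d) + (u : Dk → ZMod 2) d
      map_add' := by
        intro a b; funext d
        simp only [Submodule.coe_add, Pi.add_apply]; ring
      map_smul' := by
        intro c a; funext d
        simp only [SetLike.val_smul, Pi.smul_apply, smul_eq_mul, RingHom.id_apply]; ring }
  -- kernel of L is the constants
  have kerL_const : ∀ u : stmt15inv (σ * α), L u = 0 →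
      (∀ d, (u : Dk → ZMod 2) (σ d) = (u : Dk → ZMod 2) d) ∧
      (∀ d, (u : Dk → ZMod 2) (α d) = (u : Dk → ZMod 2) d) := by
    intro u hu
    have h1 : ∀ d, (u : Dk → ZMod 2) (σ d) = (u : Dk → ZMod 2) d := by
      intro d
      have := congrFun hu d
      simp only [Pi.zero_apply] at this
      have h2 : ∀ a b : ZMod 2, a + b = 0 → a = b := by decide
      exact h2 _ _ this
    refine ⟨h1, fun d => ?_⟩
    have hw := (memW u).mp u.2 d
    rw [h1 (α d)] at hw
    exact hw
  have finrank_kerL : Module.finrank (ZMod 2) (LinearMap.ker L) = 1 := by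
    let ev : LinearMap.ker L →ₗ[ZMod 2] (ZMod 2) :=
      { toFun := fun u => ((u : stmt15inv (σ * α)) : Dk → ZMod 2) d₀
        map_add' := by intro a b; rfl
        map_smul' := by intro c a; rfl }
    have hbij : Function.Bijective ev := by
      constructor
      · intro a b hab
        obtain ⟨h1a, h2a⟩ := kerL_const a a.2
        obtain ⟨h1b, h2b⟩ := kerL_const b b.2
        apply Subtype.ext; apply Subtype.ext; funext d
        have ca := hconst _ h1a h2a d d₀
        have cb := hconst _ h1b h2b d d₀
        show ((a : stmt15inv (σ * α)) : Dk → ZMod 2) d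
          = ((b : stmt15inv (σ * α)) : Dk → ZMod 2) d
        rw [ca, cb]; exact hab
      · intro c
        refine ⟨⟨⟨fun _ => c, ?_⟩, ?_⟩, rfl⟩
        · rw [memW]; intro d; rfl
        · rw [LinearMap.mem_ker]; funext d
          show c + c = 0
          generalize c = c'; revert c'; decide
    let e := LinearEquiv.ofBijective ev hbij
    rw [e.finrank_eq, Module.finrank_self]
  -- the pairing
  let pair : (Dk → ZMod 2) →ₗ[ZMod 2] Module.Dual (ZMod 2) (Dk → ZMod 2) :=
    LinearMap.mk₂ (ZMod 2) (fun x v => ∑ d, x d * v d)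
      (by
        intro x y v
        rw [← Finset.sum_add_distrib]
        exact Finset.sum_congr rfl (fun d _ => by simp [add_mul]))
      (by
        intro c x v
        show (∑ d, (c • x) d * v d) = c • ∑ d, x d * v d
        rw [smul_eq_mul, Finset.mul_sum]
        exact Finset.sum_congr rfl (fun d _ => by simp [mul_assoc]))
      (by
        intro x v w
        rw [← Finset.sum_add_distrib]
        exact Finset.sum_congr rfl (fun d _ => by simp [mul_add]))
      (by
        intro c x v
        show (∑ d, x d * (c • v) d) = c • ∑ d, x d * v d
        rw [smul_eq_mul, Finset.mul_sum]
        exact Finset.sum_congr rfl (fun d _ => by simp; ring))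
  have pair_single : ∀ (x : Dk → ZMod 2) (d : Dk),
      pair x (fun j => if d = j then 1 else 0) = x d := by
    intro x d
    show (∑ d', x d' * (if d = d' then 1 else 0)) = x d
    rw [Finset.sum_eq_single d]
    · simp
    · intro b _ hb; simp [Ne.symm hb]
    · intro h; exact absurd (Finset.mem_univ d) h
  have pair_surj : Function.Surjective pair := by
    intro φ
    refine ⟨fun d => φ (fun j => if d = j then 1 else 0), ?_⟩
    apply LinearMap.ext; intro v
    show (∑ d, φ (fun j => if d = j then 1 else 0) * v d) = φ v
    rw [LinearMap.pi_apply_eq_sum_univ φ v]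
    exact Finset.sum_congr rfl (fun d _ => by rw [smul_eq_mul, mul_comm])
  have pair_inj : Function.Injective pair := by
    intro x y hxy
    funext d
    rw [← pair_single x d, ← pair_single y d, hxy]
  let εe : (Dk → ZMod 2) ≃ₗ[ZMod 2] Module.Dual (ZMod 2) (Dk → ZMod 2) :=
    LinearEquiv.ofBijective pair ⟨pair_inj, pair_surj⟩
  -- B
  let B : (Dk → ZMod 2) →ₗ[ZMod 2] (stmt15inv (σ * α) →ₗ[ZMod 2] ZMod 2) :=
    (L.dualMap).comp εe.toLinearMap
  have B_apply : ∀ (x : Dk → ZMod 2) (u : stmt15inv (σ * α)),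
      B x u = ∑ d, x d * ((u : Dk → ZMod 2) (σ d) + (u : Dk → ZMod 2) d) := by
    intro x u; rfl
  have finrank_rangeB : Module.finrank (ZMod 2) (LinearMap.range B) =
      Module.finrank (ZMod 2) (LinearMap.range L) := by
    have : LinearMap.range B = LinearMap.range L.dualMap := by
      rw [show B = (L.dualMap).comp εe.toLinearMap from rfl]
      rw [LinearMap.range_comp, LinearEquiv.range, Submodule.map_top]
    rw [this, LinearMap.finrank_range_dualMap_eq_finrank_range]
  have addself : ∀ a : ZMod 2, a + a = 0 := by decide
  -- Invσ ≤ ker B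
  have hσ_ker : stmt15inv σ ≤ LinearMap.ker B := by
    intro x hx
    rw [LinearMap.mem_ker]
    apply LinearMap.ext; intro u
    rw [B_apply]
    have hxinv : ∀ d, x (σ d) = x d := hx
    have split : (∑ d, x d * ((u : Dk → ZMod 2) (σ d) + (u : Dk → ZMod 2) d)) =
        (∑ d, x d * (u : Dk → ZMod 2) (σ d)) + (∑ d, x d * (u : Dk → ZMod 2) d) := by
      rw [← Finset.sum_add_distrib]; exact Finset.sum_congr rfl (fun d _ => by ring)
    rw [split]
    have re : (∑ d, x d * (u : Dk → ZMod 2) (σ d))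
        = ∑ d, x d * (u : Dk → ZMod 2) d := by
      rw [← Equiv.sum_comp σ (fun e => x e * (u : Dk → ZMod 2) e)]
      exact Finset.sum_congr rfl (fun d _ => by rw [hxinv d])
    rw [re]
    show (∑ d, x d * (u : Dk → ZMod 2) d) + (∑ d, x d * (u : Dk → ZMod 2) d) = 0
    exact addself _
  -- Invα ≤ ker B
  have hα_ker : stmt15inv α ≤ LinearMap.ker B := by
    intro x hx
    rw [LinearMap.mem_ker]
    apply LinearMap.ext; intro u
    rw [B_apply]
    have hxinv : ∀ d, x (α d) = x d := hx
    have huW := (memW u).mp u.2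
    have split : (∑ d, x d * ((u : Dk → ZMod 2) (σ d) + (u : Dk → ZMod 2) d)) =
        (∑ d, x d * (u : Dk → ZMod 2) (σ d)) + (∑ d, x d * (u : Dk → ZMod 2) d) := by
      rw [← Finset.sum_add_distrib]; exact Finset.sum_congr rfl (fun d _ => by ring)
    rw [split]
    have re : (∑ d, x d * (u : Dk → ZMod 2) (σ d))
        = ∑ d, x d * (u : Dk → ZMod 2) d := by
      rw [← Equiv.sum_comp α (fun e => x e * (u : Dk → ZMod 2) (σ e))]
      exact Finset.sum_congr rfl (fun d _ => by rw [hxinv d, huW d])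
    rw [re]
    show (∑ d, x d * (u : Dk → ZMod 2) d) + (∑ d, x d * (u : Dk → ZMod 2) d) = 0
    exact addself _
  have hsup_ker : stmt15inv σ ⊔ stmt15inv α ≤ LinearMap.ker B := sup_le hσ_ker hα_ker
  -- dim of the intersection is 1
  have finrank_inf :
      Module.finrank (ZMod 2) ((stmt15inv σ) ⊓ (stmt15inv α) :
        Submodule (ZMod 2) (Dk → ZMod 2)) = 1 := by
    let ev : ((stmt15inv σ) ⊓ (stmt15inv α) : Submodule (ZMod 2) (Dk → ZMod 2))
        →ₗ[ZMod 2] (ZMod 2) :=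
      { toFun := fun u => (u : Dk → ZMod 2) d₀
        map_add' := by intro a b; rfl
        map_smul' := by intro c a; rfl }
    have hbij : Function.Bijective ev := by
      constructor
      · intro a b hab
        apply Subtype.ext; funext d
        have ca := hconst _ a.2.1 a.2.2 d d₀
        have cb := hconst _ b.2.1 b.2.2 d d₀
        show (a : Dk → ZMod 2) d = (b : Dk → ZMod 2) d
        rw [ca, cb]; exact hab
      · intro c
        exact ⟨⟨fun _ => c, ⟨fun d => rfl, fun d => rfl⟩⟩, rfl⟩
    let e := LinearEquiv.ofBijective ev hbij
    rw [e.finrank_eq, Module.finrank_self]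
  -- dimension bookkeeping
  have hrn_L := LinearMap.finrank_range_add_finrank_ker L
  have hrn_B := LinearMap.finrank_range_add_finrank_ker B
  have hsup := Submodule.finrank_sup_add_finrank_inf_eq (stmt15inv σ) (stmt15inv α)
  have hfinE : Module.finrank (ZMod 2) (Dk → ZMod 2) = Fintype.card Dk :=
    Module.finrank_pi (ZMod 2)
  have hfinWtop : Module.finrank (ZMod 2) (⊤ : Submodule (ZMod 2) (stmt15inv (σ * α)))
      = Module.finrank (ZMod 2) (stmt15inv (σ * α)) := finrank_top _ _
  have hker_eq : LinearMap.ker B = stmt15inv σ ⊔ stmt15inv α := by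
    symm
    apply Submodule.eq_of_le_of_finrank_eq hsup_ker
    rw [finrank_inf] at hsup
    rw [finrank_rangeB, hfinE] at hrn_B
    rw [finrank_kerL] at hrn_L
    omega
  -- main argument: 1 ∈ range L
  have one_mem : (fun _ => (1 : ZMod 2) : Dk → ZMod 2) ∈ LinearMap.range L := by
    by_contra hone
    have hq : Submodule.Quotient.mk (p := LinearMap.range L)
        (fun _ => (1 : ZMod 2) : Dk → ZMod 2) ≠ 0 :=
      fun h => hone ((Submodule.Quotient.mk_eq_zero _).mp h)
    have hex : ¬ (∀ φ : Module.Dual (ZMod 2) ((Dk → ZMod 2) ⧸ LinearMap.range L),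
        φ (Submodule.Quotient.mk (fun _ => (1 : ZMod 2) : Dk → ZMod 2)) = 0) := by
      intro hall
      exact hq ((Module.forall_dual_apply_eq_zero_iff (ZMod 2) _).mp hall)
    push_neg at hex
    obtain ⟨φ', hφ'⟩ := hex
    set φ : Module.Dual (ZMod 2) (Dk → ZMod 2) := φ'.comp (LinearMap.range L).mkQ with hφdef
    set x : Dk → ZMod 2 := fun d => φ (fun j => if d = j then 1 else 0) with hxdef
    have hpairx : pair x = φ := by
      apply LinearMap.ext; intro v
      show (∑ d, x d * v d) = φ v
      rw [LinearMap.pi_apply_eq_sum_univ φ v]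
      exact Finset.sum_congr rfl (fun d _ => by rw [smul_eq_mul, mul_comm])
    have hxker : x ∈ LinearMap.ker B := by
      rw [LinearMap.mem_ker]
      apply LinearMap.ext; intro u
      have hBx : B x u = pair x (L u) := rfl
      rw [hBx, hpairx]
      show φ' ((LinearMap.range L).mkQ (L u)) = 0
      rw [show (LinearMap.range L).mkQ (L u) = 0 by
        rw [Submodule.mkQ_apply]
        exact (Submodule.Quotient.mk_eq_zero _).mpr (LinearMap.mem_range_self L u)]
      exact map_zero φ'
    rw [hker_eq] at hxker
    obtain ⟨y, hy, z, hz, hyz⟩ := Submodule.mem_sup.mp hxker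
    have hsumx : (∑ d, x d) ≠ 0 := by
      have h1 : (∑ d, x d) = φ (fun _ => (1 : ZMod 2)) := by
        rw [← hpairx]
        show (∑ d, x d) = ∑ d, x d * (1 : ZMod 2)
        simp
      rw [h1]
      exact hφ'
    have hsumy : (∑ d, y d) = 0 := by
      have hyinv : ∀ d, y (σ d) = y d := hy
      apply Finset.sum_involution (fun d _ => σ (σ d))
      · intro a _
        have h1 : y (σ (σ a)) = y a := by rw [hyinv, hyinv]
        rw [h1]; exact addself _
      · intro a _ _; exact (hσ4fix a).2
      · intro a ha; exact Finset.mem_univ _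
      · intro a ha; exact (hσ4fix a).1
    have hsumz : (∑ d, z d) = 0 := by
      have hzinv : ∀ d, z (α d) = z d := hz
      apply Finset.sum_involution (fun d _ => α d)
      · intro a _
        rw [hzinv]; exact addself _
      · intro a _ _; exact hαfix a
      · intro a ha; exact Finset.mem_univ _
      · intro a ha
        have := congrFun (congrArg (fun p : Equiv.Perm Dk => p.toFun) hα2) a
        simpa using this
    apply hsumx
    rw [← hyz]
    rw [show (∑ d, (y + z) d) = (∑ d, y d) + (∑ d, z d) by
      rw [← Finset.sum_add_distrib]; rfl]
    rw [hsumy, hsumz, add_zero]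
  -- extract the solution
  obtain ⟨u, hu⟩ := one_mem
  have harith : ∀ a b : ZMod 2, a + b = 1 → a = b + 1 := by decide
  refine ⟨(u : Dk → ZMod 2), ?_, ?_⟩
  · intro d
    exact harith _ _ (congrFun hu d)
  · intro d
    have hw := (memW u).mp u.2 d
    have h1 : (u : Dk → ZMod 2) (σ (α d)) = (u : Dk → ZMod 2) (α d) + 1 :=
      harith _ _ (congrFun hu (α d))
    rw [hw] at h1
    have harith2 : ∀ a b : ZMod 2, b = a + 1 → a = b + 1 := by decide
    exact harith2 _ _ h1

end Stmt15Aux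

/-- Alternating assignment: for a connected 4-regular map on the sphere (encoded
by darts, rotation σ with all vertex orbits of size 4, fixed-point-free edge
involution α, sphericity = Euler relation), where the strand through the dart d
passes the vertex to the opposite dart σ (σ d) and continues along the edge via α,
a crossing assignment is `u : darts → Bool` ("the pass entering through d is
over") with opposite passes at a vertex getting opposite values. It is alternating
if the value flips along each strand. Claim: an alternating assignment exists, and
there are exactly two of them (mirror images). -/
theorem stmt_15 {Dk : Type*} [Fintype Dk]
    (σ α : Equiv.Perm Dk)
    (hα2 : α * α = 1) (hαfix : ∀ d, α d ≠ d)
    (hσ4 : ∀ d : Dk, (MulAction.orbit ↥(Subgroup.zpowers σ) d).ncard = 4)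
    (hconn : ∀ d d' : Dk,
      ∃ g ∈ Subgroup.closure ({σ, α} : Set (Equiv.Perm Dk)), g d = d')
    (heuler :
      Nat.card (Quotient (MulAction.orbitRel ↥(Subgroup.zpowers σ) Dk)) +
        Nat.card (Quotient (MulAction.orbitRel ↥(Subgroup.zpowers (σ * α)) Dk)) =
      Nat.card (Quotient (MulAction.orbitRel ↥(Subgroup.zpowers α) Dk)) + 2) :
    (∃ u : Dk → Bool,
        (∀ d, u (σ d) = !u d) ∧ (∀ d, u (α (σ (σ d))) = !u d)) ∧
    {u : Dk → Bool |
        (∀ d, u (σ d) = !u d) ∧ (∀ d, u (α (σ (σ d))) = !u d)}.ncard = 2 := by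
  classical
  -- Dk is nonempty
  rcases isEmpty_or_nonempty Dk with hemp | hne
  · exfalso
    have h0 : ∀ (π : Equiv.Perm Dk),
        Nat.card (Quotient (MulAction.orbitRel ↥(Subgroup.zpowers π) Dk)) = 0 := by
      intro π
      haveI : IsEmpty (Quotient (MulAction.orbitRel ↥(Subgroup.zpowers π) Dk)) :=
        ⟨fun q => Quotient.inductionOn q (fun d => (IsEmpty.false d).elim)⟩
      exact Nat.card_of_isEmpty
    rw [h0, h0, h0] at heuler
    omega
  obtain ⟨d₀⟩ := hne
  have hσ4fix : ∀ d, σ (σ (σ (σ d))) = d ∧ σ (σ d) ≠ d := stmt15_sigma4 hσ4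
  have hconst : ∀ (u : Dk → ZMod 2), (∀ d, u (σ d) = u d) → (∀ d, u (α d) = u d) →
      ∀ d d', u d = u d' := fun u h1 h2 => stmt15_trans hconn u h1 h2
  have hnum : Module.finrank (ZMod 2) (stmt15inv σ) +
        Module.finrank (ZMod 2) (stmt15inv (σ * α)) =
      Module.finrank (ZMod 2) (stmt15inv α) + 2 := by
    rw [stmt15_finrank_stmt15inv, stmt15_finrank_stmt15inv, stmt15_finrank_stmt15inv]
    exact heuler
  have hnum2 : Fintype.card Dk = 2 * Module.finrank (ZMod 2) (stmt15inv α) := by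
    rw [stmt15_finrank_stmt15inv]
    exact stmt15_card_eq 2 (stmt15_alpha_orbit hα2 hαfix)
  obtain ⟨u, hu1, hu2⟩ := stmt15_exists hα2 hαfix hσ4fix hconst d₀ hnum hnum2
  -- convert to Bool
  set b : Dk → Bool := fun d => decide (u d = 1) with hbdef
  have hflip : ∀ a c : ZMod 2, a = c + 1 → decide (a = 1) = !decide (c = 1) := by decide
  have hb1 : ∀ d, b (σ d) = !b d := fun d => hflip _ _ (hu1 d)
  have hbα : ∀ d, b (α d) = !b d := fun d => hflip _ _ (hu2 d)
  have hb2 : ∀ d, b (α (σ (σ d))) = !b d := by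
    intro d
    rw [hbα (σ (σ d)), hb1 (σ d), hb1 d, Bool.not_not]
  -- the negation of a solution is a solution; any solution is b or !b
  have derive_alpha : ∀ c : Dk → Bool, (∀ d, c (σ d) = !c d) →
      (∀ d, c (α (σ (σ d))) = !c d) → (∀ d, c (α d) = !c d) := by
    intro c h1 h2 e
    have h3 := h2 (σ⁻¹ (σ⁻¹ e))
    rw [stmt15_apply_inv_self, stmt15_apply_inv_self] at h3
    rw [h3]
    congr 1
    have h4 := h1 (σ⁻¹ e)
    rw [stmt15_apply_inv_self] at h4
    have h5 := h1 (σ⁻¹ (σ⁻¹ e))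
    rw [stmt15_apply_inv_self] at h5
    rw [h4, h5, Bool.not_not]
  have hset : {c : Dk → Bool |
        (∀ d, c (σ d) = !c d) ∧ (∀ d, c (α (σ (σ d))) = !c d)}
      = {b, fun d => !b d} := by
    apply Set.eq_of_subset_of_subset
    · rintro c ⟨hc1, hc2⟩
      have hcα := derive_alpha c hc1 hc2
      -- agreement function is invariant
      set w : Dk → Bool := fun d => c d == b d with hwdef
      have hwσ : ∀ d, w (σ d) = w d := by
        intro d
        show (c (σ d) == b (σ d)) = (c d == b d)
        rw [hc1 d, hb1 d]
        cases c d <;> cases b d <;> rfl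
      have hwα : ∀ d, w (α d) = w d := by
        intro d
        show (c (α d) == b (α d)) = (c d == b d)
        rw [hcα d, hbα d]
        cases c d <;> cases b d <;> rfl
      have hagree : ∀ d d', (c d == b d) = (c d' == b d') :=
        stmt15_trans hconn (fun d => c d == b d) hwσ hwα
      by_cases hcase : c d₀ = b d₀
      · left
        funext d
        have h : (c d == b d) = true := (hagree d d₀).trans (by simp [hcase])
        simpa using h
      · right
        funext d
        have h0 : (c d₀ == b d₀) = false := by simp [hcase]
        have h : (c d == b d) = false := (hagree d d₀).trans h0
        have hne : c d ≠ b d := by simpa using h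
        show c d = !b d
        cases hcd : c d <;> cases hbd : b d <;> simp_all
    · rintro c (rfl | rfl)
      · exact ⟨hb1, hb2⟩
      · refine ⟨fun d => ?_, fun d => ?_⟩
        · show (!(b (σ d))) = (!(!(b d)))
          rw [hb1 d]
        · show (!(b (α (σ (σ d))))) = (!(!(b d)))
          rw [hb2 d]
  refine ⟨⟨b, hb1, hb2⟩, ?_⟩
  rw [hset]
  apply Set.ncard_pair
  intro hcontr
  have := congrFun hcontr d₀
  cases hb : b d₀ <;> rw [hb] at this <;> simp at this
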